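/- Let u, v ∈ ℝ^d, L > 0, and γ: [0,1] → ℝ^d a C¹ curve with γ(0)=u, γ(1)=v and arc length at most L. Let k(x,y) = σ² exp(−‖x−y‖²/(2ℓ²)) with σ, ℓ > 0, fix ε ∈ (0,σ²), and set r := ℓ√(2 log(σ²/ε)). If x ∉ E(u,v,L) ⊕ B̄(0,r) (the Minkowski sum of the ellipse with the closed ball of radius r), then k(x, γ(t)) < ε for all t ∈ [0,1]. -/

import Mathlib

/-!
Since the arc length of `γ` from `0` to `t` bounds `‖γ t - u‖` and the arc length from `t` to `1`
bounds `‖γ t - v‖`, the whole curve lies in the ellipse `E(u, v, L)`. A point outside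
`E(u, v, L) ⊕ B̄(0, r)` is therefore farther than `r` from every `γ t`, and `r` is exactly the
distance at which the Gaussian kernel `σ² exp(-ρ² / (2ℓ²))` drops to `ε`.
-/

open Pointwise

theorem norm_sub_le_integral_norm_deriv {E : Type*} [NormedAddCommGroup E] [NormedSpace ℝ E]
    [CompleteSpace E] {γ : ℝ → E} (hγ : ContDiff ℝ 1 γ) {a b : ℝ} (hab : a ≤ b) :
    ‖γ b - γ a‖ ≤ ∫ s in a..b, ‖deriv γ s‖ := by
  rw [← intervalIntegral.integral_deriv_eq_sub (fun s _ => hγ.differentiable one_ne_zero s)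
    ((hγ.continuous_deriv le_rfl).intervalIntegrable a b)]
  exact intervalIntegral.norm_integral_le_integral_norm hab

theorem norm_sub_add_norm_sub_le_integral_norm_deriv {E : Type*} [NormedAddCommGroup E]
    [NormedSpace ℝ E] [CompleteSpace E] {γ : ℝ → E} (hγ : ContDiff ℝ 1 γ) {a b t : ℝ}
    (ht : t ∈ Set.Icc a b) :
    ‖γ t - γ a‖ + ‖γ t - γ b‖ ≤ ∫ s in a..b, ‖deriv γ s‖ := by
  have hcont : Continuous (fun s => ‖deriv γ s‖) := (hγ.continuous_deriv le_rfl).norm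
  rw [← intervalIntegral.integral_add_adjacent_intervals (hcont.intervalIntegrable a t)
    (hcont.intervalIntegrable t b), norm_sub_rev (γ t) (γ b)]
  exact add_le_add (norm_sub_le_integral_norm_deriv hγ ht.1)
    (norm_sub_le_integral_norm_deriv hγ ht.2)

theorem lt_norm_sub_of_notMem_add_closedBall {E : Type*} [SeminormedAddCommGroup E]
    {s : Set E} {r : ℝ} {x y : E} (hx : x ∉ s + Metric.closedBall 0 r) (hy : y ∈ s) :
    r < ‖x - y‖ := by
  by_contra! h
  exact hx ⟨y, hy, x - y, by simpa [dist_eq_norm] using h, add_sub_cancel y x⟩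

theorem mul_exp_neg_sq_div_lt {a ε ℓ ρ : ℝ} (hε : 0 < ε) (hεa : ε ≤ a) (hℓ : 0 < ℓ)
    (hρ : ℓ * √(2 * Real.log (a / ε)) < ρ) :
    a * Real.exp (-ρ ^ 2 / (2 * ℓ ^ 2)) < ε := by
  have ha : 0 < a := hε.trans_le hεa
  have hlog : 0 ≤ Real.log (a / ε) := Real.log_nonneg ((one_le_div hε).mpr hεa)
  have hr : 0 ≤ ℓ * √(2 * Real.log (a / ε)) := by positivity
  have hsq : 2 * ℓ ^ 2 * Real.log (a / ε) < ρ ^ 2 := by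
    have := pow_lt_pow_left₀ hρ hr two_ne_zero
    rwa [mul_pow, Real.sq_sqrt (by positivity), mul_left_comm, ← mul_assoc] at this
  have hexp : -ρ ^ 2 / (2 * ℓ ^ 2) < Real.log (ε / a) := by
    rw [div_lt_iff₀ (by positivity), ← inv_div, Real.log_inv]
    linarith
  calc a * Real.exp (-ρ ^ 2 / (2 * ℓ ^ 2))
      < a * Real.exp (Real.log (ε / a)) := by gcongr
    _ = ε := by rw [Real.exp_log (div_pos hε ha), mul_div_cancel₀ ε ha.ne']

theorem kernel_influence_minkowski_general {d : ℕ}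
    (u v : EuclideanSpace ℝ (Fin d)) (L : ℝ)
    (γ : ℝ → EuclideanSpace ℝ (Fin d)) (hγ : ContDiff ℝ 1 γ)
    (h0 : γ 0 = u) (h1 : γ 1 = v)
    (hlen : (∫ t in (0:ℝ)..1, ‖deriv γ t‖) ≤ L)
    (σ ℓ ε : ℝ) (hℓ : 0 < ℓ) (hε : ε ∈ Set.Ioo 0 (σ^2))
    (x : EuclideanSpace ℝ (Fin d))
    (hx : x ∉ {y : EuclideanSpace ℝ (Fin d) | ‖y - u‖ + ‖y - v‖ ≤ L} +
        Metric.closedBall (0 : EuclideanSpace ℝ (Fin d)) (ℓ * Real.sqrt (2 * Real.log (σ^2 / ε)))) :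
    ∀ t ∈ Set.Icc (0:ℝ) 1, σ^2 * Real.exp (-‖x - γ t‖^2 / (2 * ℓ^2)) < ε := by
  intro t ht
  have hellipse : ‖γ t - u‖ + ‖γ t - v‖ ≤ L := by
    rw [← h0, ← h1]
    exact (norm_sub_add_norm_sub_le_integral_norm_deriv hγ ht).trans hlen
  exact mul_exp_neg_sq_div_lt hε.1 hε.2.le hℓ (lt_norm_sub_of_notMem_add_closedBall hx hellipse)

theorem kernel_influence_minkowski {d : ℕ}
    (u v : EuclideanSpace ℝ (Fin d)) (L : ℝ) (hL : 0 < L)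
    (γ : ℝ → EuclideanSpace ℝ (Fin d)) (hγ : ContDiff ℝ 1 γ)
    (h0 : γ 0 = u) (h1 : γ 1 = v)
    (hlen : (∫ t in (0:ℝ)..1, ‖deriv γ t‖) ≤ L)
    (σ ℓ ε : ℝ) (hσ : 0 < σ) (hℓ : 0 < ℓ) (hε : ε ∈ Set.Ioo 0 (σ^2))
    (x : EuclideanSpace ℝ (Fin d))
    (hx : x ∉ {y : EuclideanSpace ℝ (Fin d) | ‖y - u‖ + ‖y - v‖ ≤ L} +
        Metric.closedBall (0 : EuclideanSpace ℝ (Fin d)) (ℓ * Real.sqrt (2 * Real.log (σ^2 / ε)))) :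
    ∀ t ∈ Set.Icc (0:ℝ) 1, σ^2 * Real.exp (-‖x - γ t‖^2 / (2 * ℓ^2)) < ε :=
  kernel_influence_minkowski_general u v L γ hγ h0 h1 hlen σ ℓ ε hℓ hε x hx
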